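/- Let K ≥ 1 be an integer and for integers i with 2 ≤ i ≤ 2^K define j_i = 2K + 2 + 5(i−1) + 3 Σ_{h=1}^{K−1} ⌊ (i−1) / 2^{K−h} ⌋ and L(i) = ⌊ log₂(i−1) ⌋. Then j_i satisfies the two-sided bound: 2K + 2 + 5(i−1) + 3(1 − 2^{−L(i)})(i−1) − 3 L(i) ≤ j_i ≤ 2K + 2 + 5(i−1) + 3(1 − 2^{−L(i)})(i−1). -/

import Mathlib

/-!
Reindexing `h ↦ K - h` turns the sum into `∑_{m=1}^{K-1} ⌊(i-1)/2^m⌋`, whose terms vanish for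
`m > L(i)` since `i - 1 < 2^(L(i)+1)`. Each remaining term lies within `1` below `(i-1)/2^m`, and
`∑_{m=1}^{L} 2^{-m} = 1 - 2^{-L}`.
-/

open Finset

theorem Finset.sum_Icc_one_tsub_reflect {M : Type*} [AddCommMonoid M] (f : ℕ → M) (K : ℕ) :
    ∑ h ∈ Icc 1 (K - 1), f (K - h) = ∑ m ∈ Icc 1 (K - 1), f m := by
  refine sum_nbij' (fun h => K - h) (fun m => K - m) ?_ ?_ ?_ ?_ fun _ _ => rfl <;>
    intro a ha <;> grind [coe_Icc]

theorem Nat.sum_Icc_div_pow_eq_sum_Icc_log {b n N : ℕ} (hb : 1 < b) (hN : Nat.log b n ≤ N) :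
    ∑ m ∈ Icc 1 N, n / b ^ m = ∑ m ∈ Icc 1 (Nat.log b n), n / b ^ m := by
  refine (sum_subset (Icc_subset_Icc_right hN) fun m _ hm => ?_).symm
  have hlog : Nat.log b n < m := by
    simp only [mem_Icc, not_and, not_le] at hm
    exact hm (mem_Icc.mp ‹m ∈ Icc 1 N›).1
  exact Nat.div_eq_of_lt (Nat.lt_pow_of_log_lt hb hlog)

theorem sum_Icc_one_inv_two_pow (L : ℕ) :
    ∑ m ∈ Icc 1 L, ((2 : ℝ) ^ m)⁻¹ = 1 - ((2 : ℝ) ^ L)⁻¹ := by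
  induction L with
  | zero => simp
  | succ L ih =>
    rw [sum_Icc_succ_top (by omega), ih, pow_succ]
    ring

theorem Nat.div_sub_one_le_cast_div (n d : ℕ) : (n : ℝ) / d - 1 ≤ ((n / d : ℕ) : ℝ) := by
  rw [← Nat.floor_div_eq_div (K := ℝ)]
  exact (Nat.sub_one_lt_floor _).le

theorem sum_Icc_one_div_two_pow_bounds (n L : ℕ) :
    (n : ℝ) * (1 - ((2 : ℝ) ^ L)⁻¹) - L ≤ ∑ m ∈ Icc 1 L, ((n / 2 ^ m : ℕ) : ℝ) ∧
      ∑ m ∈ Icc 1 L, ((n / 2 ^ m : ℕ) : ℝ) ≤ (n : ℝ) * (1 - ((2 : ℝ) ^ L)⁻¹) := by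
  have hgeom : ∑ m ∈ Icc 1 L, (n : ℝ) / 2 ^ m = n * (1 - ((2 : ℝ) ^ L)⁻¹) := by
    simp only [div_eq_mul_inv, ← mul_sum, sum_Icc_one_inv_two_pow]
  constructor
  · calc (n : ℝ) * (1 - ((2 : ℝ) ^ L)⁻¹) - L = ∑ m ∈ Icc 1 L, ((n : ℝ) / 2 ^ m - 1) := by
          simp [sum_sub_distrib, hgeom]
      _ ≤ ∑ m ∈ Icc 1 L, ((n / 2 ^ m : ℕ) : ℝ) :=
          sum_le_sum fun m _ => by exact_mod_cast Nat.div_sub_one_le_cast_div n (2 ^ m)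
  · calc ∑ m ∈ Icc 1 L, ((n / 2 ^ m : ℕ) : ℝ) ≤ ∑ m ∈ Icc 1 L, (n : ℝ) / 2 ^ m :=
          sum_le_sum fun m _ => by exact_mod_cast Nat.cast_div_le (m := n) (n := 2 ^ m)
      _ = n * (1 - ((2 : ℝ) ^ L)⁻¹) := hgeom

theorem subroutine_step_indices_bounds (K : ℕ) (i : ℕ) (hi1 : 2 ≤ i)
    (hi2 : i ≤ 2 ^ K) :
    letI j : ℕ := 2 * K + 2 + 5 * (i - 1) + 3 * ∑ h ∈ Finset.Icc 1 (K - 1), (i - 1) / 2 ^ (K - h)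
    letI L : ℕ := Nat.log 2 (i - 1)
    2 * (K : ℝ) + 2 + 5 * ((i : ℝ) - 1) + 3 * (1 - ((2 : ℝ) ^ L)⁻¹) * ((i : ℝ) - 1)
        - 3 * (L : ℝ) ≤ (j : ℝ) ∧
      (j : ℝ) ≤ 2 * (K : ℝ) + 2 + 5 * ((i : ℝ) - 1)
        + 3 * (1 - ((2 : ℝ) ^ L)⁻¹) * ((i : ℝ) - 1) := by
  have hlog : Nat.log 2 (i - 1) ≤ K - 1 := by
    have := Nat.log_lt_of_lt_pow (b := 2) (by omega : i - 1 ≠ 0) (by omega : i - 1 < 2 ^ K)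
    omega
  have hsum : ∑ h ∈ Icc 1 (K - 1), (i - 1) / 2 ^ (K - h)
      = ∑ m ∈ Icc 1 (Nat.log 2 (i - 1)), (i - 1) / 2 ^ m := by
    rw [sum_Icc_one_tsub_reflect (fun m => (i - 1) / 2 ^ m),
      Nat.sum_Icc_div_pow_eq_sum_Icc_log one_lt_two hlog]
  obtain ⟨hlower, hupper⟩ := sum_Icc_one_div_two_pow_bounds (i - 1) (Nat.log 2 (i - 1))
  have hcast : ((i - 1 : ℕ) : ℝ) = (i : ℝ) - 1 := by rw [Nat.cast_sub (by omega), Nat.cast_one]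
  simp only [hsum, Nat.cast_add, Nat.cast_mul, Nat.cast_sum, Nat.cast_ofNat, hcast]
    at hlower hupper ⊢
  constructor <;> linarith
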